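/- Let H be a Hilbert space and u, v : [0,T] → H bounded and weakly continuous. With u_h, v_h the Friedrichs time-mollifications (using an even mollifier j_h), one has lim_{h→0} ⟨u(t), v_h(t)⟩ = lim_{h→0} ⟨u_h(t), v(t)⟩ = (1/2)⟨u(t), v(t)⟩ for each t in the interior of [0,T], where the factor 1/2 arises because only half the mass of j_h lies to one side of t at the endpoint of the integration interval. -/

import Mathlib

/-!
Substituting `s = t - hσ` turns the mollification at time `t` into `∫₀¹ j σ • v (t - hσ) dσ`
(`j` vanishes beyond `1`), and evenness gives `∫₀¹ j = 1/2`; for `v` continuous on `[0, t]` the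
limit `h → 0⁺` is then continuity of a parametric integral. A weakly continuous `v` is reduced to
the scalar functions `⟪a, v ·⟫` by moving the inner product inside the Bochner integral, which
needs `v` integrable: in a separable Hilbert space a weakly measurable function is strongly
measurable, being the pointwise limit of its partial sums in a (countable) Hilbert basis.
-/

open MeasureTheory Filter Set Topology

theorem Orthonormal.countable {𝕜 E ι : Type*} [RCLike 𝕜] [NormedAddCommGroup E]
    [InnerProductSpace 𝕜 E] [TopologicalSpace.SeparableSpace E] {v : ι → E}
    (hv : Orthonormal 𝕜 v) : Countable ι := by
  refine Pairwise.countable_of_isOpen_disjoint (s := fun i => Metric.ball (v i) (1 / 2))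
    (fun i j hij => Metric.ball_disjoint_ball ?_) (fun _ => Metric.isOpen_ball)
    (fun _ => Metric.nonempty_ball.2 one_half_pos)
  have hdist : dist (v i) (v j) ^ 2 = 2 := by
    rw [dist_eq_norm, @norm_sub_sq 𝕜, hv.inner_eq_zero hij, hv.1 i, hv.1 j]
    norm_num
  nlinarith [dist_nonneg (x := v i) (y := v j)]

theorem aestronglyMeasurable_of_forall_inner {𝕜 E α : Type*} [RCLike 𝕜] [NormedAddCommGroup E]
    [InnerProductSpace 𝕜 E] [CompleteSpace E] [TopologicalSpace.SeparableSpace E]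
    [MeasurableSpace α] {μ : Measure α} {g : α → E}
    (hg : ∀ w : E, AEStronglyMeasurable (fun x => inner 𝕜 w (g x)) μ) :
    AEStronglyMeasurable g μ := by
  obtain ⟨w, b, -⟩ := exists_hilbertBasis 𝕜 E
  have := b.orthonormal.countable
  refine aestronglyMeasurable_of_tendsto_ae atTop (fun A : Finset w => ?_)
    (ae_of_all _ fun x => b.hasSum_repr (g x))
  refine Finset.aestronglyMeasurable_fun_sum A fun i _ => (hg (b i)).smul_const (b i) |>.congr ?_
  exact ae_of_all _ fun x => by simp [b.repr_apply_apply]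

theorem intervalIntegrable_of_continuousOn_inner {𝕜 H : Type*} [RCLike 𝕜] [NormedAddCommGroup H]
    [InnerProductSpace 𝕜 H] [CompleteSpace H] [SecondCountableTopology H] {v : ℝ → H}
    {a b M : ℝ} (hab : a ≤ b) (hvM : ∀ τ ∈ Icc a b, ‖v τ‖ ≤ M)
    (hvw : ∀ w : H, ContinuousOn (fun τ => inner 𝕜 w (v τ)) (Icc a b)) :
    IntervalIntegrable v volume a b := by
  rw [intervalIntegrable_iff_integrableOn_Icc_of_le hab]
  exact Integrable.of_bound
    (aestronglyMeasurable_of_forall_inner fun w =>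
      (hvw w).aestronglyMeasurable measurableSet_Icc) M
    ((ae_restrict_iff' measurableSet_Icc).2 (ae_of_all _ hvM))

theorem integral_Ioi_of_even {f : ℝ → ℝ} (hf : Integrable f) (heven : ∀ x, f (-x) = f x) :
    ∫ x in Ioi 0, f x = (∫ x, f x) / 2 := by
  have hsymm : ∫ x in Iic 0, f x = ∫ x in Ioi 0, f x := by
    simpa [heven] using (integral_comp_neg_Ioi 0 f).symm
  rw [← intervalIntegral.integral_Iic_add_Ioi hf.integrableOn hf.integrableOn, hsymm]
  ring

theorem intervalIntegral_zero_one_of_even {j : ℝ → ℝ} (hj : Continuous j)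
    (hjeven : ∀ s, j (-s) = j s) (hjsupp : Function.support j ⊆ Ioo (-1) 1) :
    ∫ s in (0 : ℝ)..1, j s = (∫ s, j s) / 2 := by
  have hjint : Integrable j := hj.integrable_of_hasCompactSupport
    (.of_support_subset_isCompact isCompact_Icc (hjsupp.trans Ioo_subset_Icc_self))
  rw [← integral_Ioi_of_even hjint hjeven, intervalIntegral.integral_of_le zero_le_one,
    ← setIntegral_eq_of_subset_of_forall_sdiff_eq_zero measurableSet_Ioi Ioc_subset_Ioi_self]
  exact fun x hx => Function.notMem_support.1 fun hjx => hx.2 ⟨hx.1, (hjsupp hjx).2.le⟩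

section TimeMollify

variable {E : Type*} [NormedAddCommGroup E] [NormedSpace ℝ E]

noncomputable def timeMollify (j : ℝ → ℝ) (h : ℝ) (v : ℝ → E) (t : ℝ) : E :=
  ∫ s in (0 : ℝ)..t, (h⁻¹ * j ((t - s) / h)) • v s

theorem timeMollify_eq_intervalIntegral {j : ℝ → ℝ} (hjsupp : Function.support j ⊆ Ioo (-1) 1)
    (v : ℝ → E) {h t : ℝ} (hh : 0 < h) (hht : h ≤ t) :
    timeMollify j h v t = ∫ σ in (0 : ℝ)..1, j σ • v (t - h * σ) := by
  set F : ℝ → E := fun σ => j σ • v (t - h * σ)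
  have hF : ∀ s, (h⁻¹ * j ((t - s) / h)) • v s = h⁻¹ • F (t / h - s / h) := by
    intro s
    simp only [F, ← sub_div, mul_div_cancel₀ _ hh.ne', sub_sub_cancel, smul_smul]
  have hth : (1 : ℝ) ≤ t / h := (one_le_div hh).2 hht
  calc timeMollify j h v t = ∫ σ in (0 : ℝ)..t / h, F σ := by
        simp [timeMollify, hF, hh.ne']
    _ = ∫ σ in (0 : ℝ)..1, F σ := by
        rw [intervalIntegral.integral_of_le (zero_le_one.trans hth),
          intervalIntegral.integral_of_le zero_le_one]
        refine setIntegral_eq_of_subset_of_forall_sdiff_eq_zero measurableSet_Ioc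
          (Ioc_subset_Ioc_right hth) fun σ hσ => ?_
        have hjσ : j σ = 0 := Function.notMem_support.1 fun hjσ =>
          hσ.2 ⟨hσ.1.1, (hjsupp hjσ).2.le⟩
        simp [F, hjσ]

theorem tendsto_timeMollify [CompleteSpace E] {j : ℝ → ℝ} (hj : Continuous j)
    (hjeven : ∀ s, j (-s) = j s) (hjsupp : Function.support j ⊆ Ioo (-1) 1)
    (hjint : ∫ s, j s = 1) {v : ℝ → E} {t : ℝ} (ht : 0 < t) (hv : ContinuousOn v (Icc 0 t)) :
    Tendsto (fun h => timeMollify j h v t) (𝓝[>] 0) (𝓝 ((1 / 2 : ℝ) • v t)) := by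
  -- Clamping `v` to `[0, t]` makes the integrand jointly continuous in `(h, σ)`.
  set w : ℝ → E := IccExtend ht.le ((Icc 0 t).domRestrict v)
  have hw : Continuous w := continuous_IccExtend_iff.2 hv.domRestrict
  set φ : ℝ → E := fun h => ∫ σ in (0 : ℝ)..1, j σ • w (t - h * σ)
  have hφ : Continuous φ :=
    intervalIntegral.continuous_parametric_intervalIntegral_of_continuous' (by fun_prop) 0 1
  have hφ0 : φ 0 = (1 / 2 : ℝ) • v t := by
    simp [φ, w, intervalIntegral.integral_smul_const,
      intervalIntegral_zero_one_of_even hj hjeven hjsupp, hjint]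
  have hφv : ∀ h ∈ Ioc 0 t, timeMollify j h v t = φ h := by
    intro h hh
    rw [timeMollify_eq_intervalIntegral hjsupp v hh.1 hh.2]
    refine intervalIntegral.integral_congr fun σ hσ => ?_
    rw [uIcc_of_le zero_le_one] at hσ
    have hmem : t - h * σ ∈ Icc 0 t :=
      ⟨by nlinarith [hh.1, hh.2, hσ.1, hσ.2], by nlinarith [hh.1, hσ.1]⟩
    simp [w, IccExtend_of_mem ht.le _ hmem]
  rw [← hφ0]
  exact (hφ.tendsto 0).mono_left nhdsWithin_le_nhds |>.congr' <|
    eventually_of_mem (Ioc_mem_nhdsGT ht) fun h hh => (hφv h hh).symm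

theorem ContinuousLinearMap.map_timeMollify {F : Type*} [NormedAddCommGroup F] [NormedSpace ℝ F]
    [CompleteSpace E] [CompleteSpace F] (L : E →L[ℝ] F) {j : ℝ → ℝ} {h t : ℝ} {v : ℝ → E}
    (hv : IntervalIntegrable (fun s => (h⁻¹ * j ((t - s) / h)) • v s) volume 0 t) :
    L (timeMollify j h v t) = timeMollify j h (fun s => L (v s)) t := by
  simp only [timeMollify, ← L.intervalIntegral_comp_comm hv, L.map_smul]

end TimeMollify

theorem tendsto_inner_timeMollify {H : Type*} [NormedAddCommGroup H] [InnerProductSpace ℝ H]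
    [CompleteSpace H] [SecondCountableTopology H] {j : ℝ → ℝ} (hj : Continuous j)
    (hjeven : ∀ s, j (-s) = j s) (hjsupp : Function.support j ⊆ Ioo (-1) 1)
    (hjint : ∫ s, j s = 1) {v : ℝ → H} {t M : ℝ} (ht : 0 < t) (hvM : ∀ τ ∈ Icc 0 t, ‖v τ‖ ≤ M)
    (hvw : ∀ w : H, ContinuousOn (fun τ => inner ℝ w (v τ)) (Icc 0 t)) (a : H) :
    Tendsto (fun h => inner ℝ a (timeMollify j h v t)) (𝓝[>] 0)
      (𝓝 ((1 / 2) * inner ℝ a (v t))) := by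
  have hv := intervalIntegrable_of_continuousOn_inner ht.le hvM hvw
  have hcomm : ∀ h, inner ℝ a (timeMollify j h v t) =
      timeMollify j h (fun s => inner ℝ a (v s)) t :=
    fun h => (innerSL ℝ a).map_timeMollify (hv.continuousOn_smul (by fun_prop))
  simpa only [hcomm, smul_eq_mul] using tendsto_timeMollify hj hjeven hjsupp hjint ht (hvw a)

theorem mollifier_half_limit_general
    {H : Type*} [NormedAddCommGroup H] [InnerProductSpace ℝ H] [CompleteSpace H]
    [SecondCountableTopology H]
    (T : ℝ) (u v : ℝ → H)
    (hubdd : ∃ M, ∀ τ ∈ Set.Icc 0 T, ‖u τ‖ ≤ M ∧ ‖v τ‖ ≤ M)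
    (huw : ∀ w : H, ContinuousOn (fun τ => (inner ℝ w (u τ) : ℝ)) (Set.Icc 0 T))
    (hvw : ∀ w : H, ContinuousOn (fun τ => (inner ℝ w (v τ) : ℝ)) (Set.Icc 0 T))
    (j : ℝ → ℝ) (hjcont : Continuous j) (hjeven : ∀ s, j (-s) = j s)
    (hjsupp : Function.support j ⊆ Set.Ioo (-1) 1)
    (hjint : ∫ s, j s = 1)
    (t : ℝ) (ht0 : 0 < t) (htT : t < T) :
    Filter.Tendsto
        (fun h : ℝ => (inner ℝ (u t) (∫ s in (0:ℝ)..t, (h⁻¹ * j ((t - s)/h)) • v s) : ℝ))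
        (nhdsWithin 0 (Set.Ioi 0)) (nhds ((1/2) * (inner ℝ (u t) (v t) : ℝ))) ∧
    Filter.Tendsto
        (fun h : ℝ => (inner ℝ (∫ s in (0:ℝ)..t, (h⁻¹ * j ((t - s)/h)) • u s) (v t) : ℝ))
        (nhdsWithin 0 (Set.Ioi 0)) (nhds ((1/2) * (inner ℝ (u t) (v t) : ℝ))) := by
  obtain ⟨M, hM⟩ := hubdd
  have hsub : Icc 0 t ⊆ Icc 0 T := Icc_subset_Icc_right htT.le
  constructor
  · exact tendsto_inner_timeMollify hjcont hjeven hjsupp hjint ht0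
      (fun τ hτ => (hM τ (hsub hτ)).2) (fun w => (hvw w).mono hsub) (u t)
  · simp_rw [real_inner_comm (v t)]
    exact tendsto_inner_timeMollify hjcont hjeven hjsupp hjint ht0
      (fun τ hτ => (hM τ (hsub hτ)).1) (fun w => (huw w).mono hsub) (v t)

/-- Property (5.8) of Friedrichs time-mollifiers: for bounded, weakly continuous
`u, v : [0,T] → H` and the mollifications `u_h, v_h` over `[0,t]` built from an
even, nonnegative `j` supported in `(−1,1)` with unit integral
(`j_h(s) = h⁻¹ j(s/h)`), one has
`lim_{h→0⁺} ⟨u(t), v_h(t)⟩ = lim_{h→0⁺} ⟨u_h(t), v(t)⟩ = (1/2)⟨u(t), v(t)⟩`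
at every interior time `t`, since only half the mass of `j_h` lies inside the
integration interval at its endpoint. -/
theorem mollifier_half_limit
    {H : Type*} [NormedAddCommGroup H] [InnerProductSpace ℝ H] [CompleteSpace H]
    [SecondCountableTopology H]
    (T : ℝ) (hT : 0 < T) (u v : ℝ → H)
    (hubdd : ∃ M, ∀ τ ∈ Set.Icc 0 T, ‖u τ‖ ≤ M ∧ ‖v τ‖ ≤ M)
    (huw : ∀ w : H, ContinuousOn (fun τ => (inner ℝ w (u τ) : ℝ)) (Set.Icc 0 T))
    (hvw : ∀ w : H, ContinuousOn (fun τ => (inner ℝ w (v τ) : ℝ)) (Set.Icc 0 T))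
    (j : ℝ → ℝ) (hjcont : Continuous j) (hjeven : ∀ s, j (-s) = j s)
    (hjnonneg : ∀ s, 0 ≤ j s) (hjsupp : Function.support j ⊆ Set.Ioo (-1) 1)
    (hjint : ∫ s, j s = 1)
    (t : ℝ) (ht0 : 0 < t) (htT : t < T) :
    Filter.Tendsto
        (fun h : ℝ => (inner ℝ (u t) (∫ s in (0:ℝ)..t, (h⁻¹ * j ((t - s)/h)) • v s) : ℝ))
        (nhdsWithin 0 (Set.Ioi 0)) (nhds ((1/2) * (inner ℝ (u t) (v t) : ℝ))) ∧
    Filter.Tendsto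
        (fun h : ℝ => (inner ℝ (∫ s in (0:ℝ)..t, (h⁻¹ * j ((t - s)/h)) • u s) (v t) : ℝ))
        (nhdsWithin 0 (Set.Ioi 0)) (nhds ((1/2) * (inner ℝ (u t) (v t) : ℝ))) :=
  mollifier_half_limit_general T u v hubdd huw hvw j hjcont hjeven hjsupp hjint t ht0 htT
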